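/- For two bounded measurable maps and data y, y' with |y|_Σ, |y'|_Σ ≤ r, the posteriors satisfy d_Hell(γ^y, γ^{y'}) ≤ C(r) |y − y'|_Σ, i.e. the posterior depends locally Lipschitz continuously on the data in the Hellinger metric. -/

import Mathlib

/-!
Put `L = r + |M|`, so that `‖y - G u‖ ≤ L` whenever `‖y‖ ≤ r`, and `c = exp (-L² / 2)`. Then
every likelihood `exp (-½‖y - G u‖²)` lies in `[c, 1]`, hence so does the evidence `Z(y)`, and
the posterior density is at least `c`. On this ball the potential `½‖y - G u‖²` is `L`-Lipschitz
in `y` and `exp` is `1`-Lipschitz on `(-∞, 0]`, so likelihoods and evidences move by at most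
`L‖y - y'‖`. Quotients and square roots of quantities bounded below by `c` are Lipschitz too,
which gives a bound on `|√(dγ^y/dγ) - √(dγ^{y'}/dγ)|` that is uniform in `u`; as `γ` is a
probability measure, this bounds the Hellinger distance.
-/

open MeasureTheory Real

namespace Real

lemma abs_exp_neg_sub_exp_neg_le {s t : ℝ} (hs : 0 ≤ s) (ht : 0 ≤ t) :
    |exp (-s) - exp (-t)| ≤ |s - t| := by
  wlog hst : s ≤ t generalizing s t
  · rw [abs_sub_comm, abs_sub_comm s t]
    exact this ht hs (le_of_not_ge hst)
  have h_le_one : exp (-s) ≤ 1 := exp_le_one_iff.2 (by linarith)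
  have h_split : exp (-t) = exp (-s) * exp (-(t - s)) := by rw [← exp_add]; ring_nf
  have h_tangent : -(t - s) + 1 ≤ exp (-(t - s)) := add_one_le_exp _
  have h_anti : exp (-t) ≤ exp (-s) := exp_le_exp.2 (by linarith)
  rw [abs_of_nonneg (sub_nonneg.2 h_anti), abs_of_nonpos (by linarith)]
  nlinarith [exp_pos (-s)]

lemma abs_sqrt_sub_sqrt_le {c x y : ℝ} (hc : 0 < c) (hx : c ≤ x) (hy : c ≤ y) :
    |√x - √y| ≤ |x - y| / (2 * √c) := by
  have hcx : √c ≤ √x := sqrt_le_sqrt hx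
  have hcy : √c ≤ √y := sqrt_le_sqrt hy
  have h_factor : |√x - √y| * (√x + √y) = |x - y| := by
    rw [← abs_of_nonneg (add_nonneg (sqrt_nonneg x) (sqrt_nonneg y)), ← abs_mul]
    congr 1
    linear_combination sq_sqrt (hc.le.trans hx) - sq_sqrt (hc.le.trans hy)
  rw [le_div_iff₀ (by positivity), ← h_factor]
  gcongr
  linarith

end Real

lemma abs_div_sub_div_le {a a' b b' c : ℝ} (hc : 0 < c) (hc_le : c ≤ 1) (hb : c ≤ b)
    (hb' : c ≤ b') (ha' : |a'| ≤ 1) :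
    |a / b - a' / b'| ≤ (|a - a'| + |b - b'|) / c ^ 2 := by
  have hb0 : 0 < b := hc.trans_le hb
  have hb'0 : 0 < b' := hc.trans_le hb'
  have h_split : a / b - a' / b' = (a - a') / b + a' * (b' - b) / (b * b') := by
    field_simp
    ring
  have h_first : |a - a'| / b ≤ |a - a'| / c ^ 2 :=
    div_le_div_of_nonneg_left (abs_nonneg _) (by positivity) (by nlinarith)
  have h_second : |a'| * |b' - b| / (b * b') ≤ |b - b'| / c ^ 2 := by
    rw [abs_sub_comm b' b]
    exact div_le_div₀ (abs_nonneg _) (mul_le_of_le_one_left (abs_nonneg _) ha') (by positivity)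
      (by rw [sq]; exact mul_le_mul hb hb' hc.le hb0.le)
  rw [h_split, add_div]
  refine (abs_add_le _ _).trans (add_le_add ?_ ?_)
  · rwa [abs_div, abs_of_pos hb0]
  · rwa [abs_div, abs_mul, abs_of_pos (mul_pos hb0 hb'0)]

lemma abs_half_norm_sub_sq_sub_le {E : Type*} [SeminormedAddCommGroup E] {y y' g : E} {L : ℝ}
    (h : ‖y - g‖ ≤ L) (h' : ‖y' - g‖ ≤ L) :
    |1 / 2 * ‖y - g‖ ^ 2 - 1 / 2 * ‖y' - g‖ ^ 2| ≤ L * ‖y - y'‖ := by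
  have h_diff : |‖y - g‖ - ‖y' - g‖| ≤ ‖y - y'‖ := by
    simpa only [sub_sub_sub_cancel_right] using abs_norm_sub_norm_le (y - g) (y' - g)
  have h_sum : ‖y - g‖ + ‖y' - g‖ ≤ 2 * L := by linarith
  calc |1 / 2 * ‖y - g‖ ^ 2 - 1 / 2 * ‖y' - g‖ ^ 2|
      = |‖y - g‖ - ‖y' - g‖| * (‖y - g‖ + ‖y' - g‖) / 2 := by
        rw [← abs_of_nonneg (by positivity : 0 ≤ ‖y - g‖ + ‖y' - g‖), ← abs_mul,
          ← abs_of_pos (two_pos (α := ℝ)), ← abs_div]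
        ring_nf
    _ ≤ ‖y - y'‖ * (2 * L) / 2 := by gcongr
    _ = L * ‖y - y'‖ := by ring

noncomputable section

variable {U E : Type*} [MeasurableSpace U] [SeminormedAddCommGroup E]

def gaussLikelihood (y g : E) : ℝ := exp (-(1 / 2 * ‖y - g‖ ^ 2))

/-- The normalising constant `Z(y)` of the posterior. -/
def evidence (γ : Measure U) (G : U → E) (y : E) : ℝ := ∫ u, gaussLikelihood y (G u) ∂γ

/-- The density `dγ^y/dγ`. -/
def posteriorDensity (γ : Measure U) (G : U → E) (y : E) (u : U) : ℝ :=
  gaussLikelihood y (G u) / evidence γ G y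

def hellingerDist (μ : Measure U) (p q : U → ℝ) : ℝ :=
  √(1 / 2 * ∫ u, (√(p u) - √(q u)) ^ 2 ∂μ)

lemma hellingerDist_le_of_abs_sqrt_sub_le (μ : Measure U) [IsProbabilityMeasure μ]
    {p q : U → ℝ} {K : ℝ} (h : ∀ u, |√(p u) - √(q u)| ≤ K) : hellingerDist μ p q ≤ K := by
  obtain ⟨u₀⟩ := nonempty_of_isProbabilityMeasure μ
  have hK : 0 ≤ K := (abs_nonneg _).trans (h u₀)
  have h_sq : ∀ u, (√(p u) - √(q u)) ^ 2 ≤ K ^ 2 := fun u => by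
    simpa only [sq_abs] using pow_le_pow_left₀ (abs_nonneg _) (h u) 2
  have h_int : ∫ u, (√(p u) - √(q u)) ^ 2 ∂μ ≤ K ^ 2 := by
    simpa using integral_mono_of_nonneg (μ := μ) (.of_forall fun u => sq_nonneg _)
      (integrable_const (K ^ 2)) (.of_forall h_sq)
  have h_int_nonneg : 0 ≤ ∫ u, (√(p u) - √(q u)) ^ 2 ∂μ := integral_nonneg fun u => sq_nonneg _
  calc hellingerDist μ p q ≤ √(K ^ 2) := sqrt_le_sqrt (by linarith)
    _ = K := sqrt_sq hK

lemma gaussLikelihood_pos (y g : E) : 0 < gaussLikelihood y g := exp_pos _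

lemma gaussLikelihood_le_one (y g : E) : gaussLikelihood y g ≤ 1 :=
  exp_le_one_iff.2 (neg_nonpos.2 (by positivity))

lemma exp_neg_sq_div_two_le_gaussLikelihood {y g : E} {L : ℝ} (h : ‖y - g‖ ≤ L) :
    exp (-(L ^ 2 / 2)) ≤ gaussLikelihood y g := by
  have := pow_le_pow_left₀ (norm_nonneg _) h 2
  exact exp_le_exp.2 (by linarith)

lemma abs_gaussLikelihood_sub_le {y y' g : E} {L : ℝ} (h : ‖y - g‖ ≤ L) (h' : ‖y' - g‖ ≤ L) :
    |gaussLikelihood y g - gaussLikelihood y' g| ≤ L * ‖y - y'‖ :=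
  (abs_exp_neg_sub_exp_neg_le (by positivity) (by positivity)).trans
    (abs_half_norm_sub_sq_sub_le h h')

lemma evidence_le_one (γ : Measure U) [IsProbabilityMeasure γ] (G : U → E) (y : E) :
    evidence γ G y ≤ 1 := by
  simpa [evidence] using integral_mono_of_nonneg (μ := γ)
    (.of_forall fun u => (gaussLikelihood_pos y (G u)).le) (integrable_const (1 : ℝ))
    (.of_forall fun u => gaussLikelihood_le_one y (G u))

section Posterior

variable [MeasurableSpace E] [OpensMeasurableSpace E] (γ : Measure U) {G : U → E}

lemma integrable_gaussLikelihood_comp [IsFiniteMeasure γ] (hG : Measurable G) (y : E) :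
    Integrable (fun u => gaussLikelihood y (G u)) γ := by
  have h_cont : Continuous (gaussLikelihood y) := by unfold gaussLikelihood; fun_prop
  refine Integrable.of_bound (h_cont.measurable.comp hG).aestronglyMeasurable 1
    (.of_forall fun u => ?_)
  rw [norm_of_nonneg (gaussLikelihood_pos y (G u)).le]
  exact gaussLikelihood_le_one y (G u)

variable [IsProbabilityMeasure γ]

lemma exp_neg_sq_div_two_le_evidence (hG : Measurable G) {y : E} {L : ℝ}
    (hL : ∀ u, ‖y - G u‖ ≤ L) : exp (-(L ^ 2 / 2)) ≤ evidence γ G y := by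
  simpa [evidence] using integral_mono (integrable_const _)
    (integrable_gaussLikelihood_comp γ hG y) fun u => exp_neg_sq_div_two_le_gaussLikelihood (hL u)

lemma abs_evidence_sub_le (hG : Measurable G) {y y' : E} {L : ℝ}
    (hL : ∀ u, ‖y - G u‖ ≤ L) (hL' : ∀ u, ‖y' - G u‖ ≤ L) :
    |evidence γ G y - evidence γ G y'| ≤ L * ‖y - y'‖ := by
  rw [evidence, evidence, ← integral_sub (integrable_gaussLikelihood_comp γ hG y)
    (integrable_gaussLikelihood_comp γ hG y')]
  simpa using norm_integral_le_of_norm_le_const (μ := γ)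
    (f := fun u => gaussLikelihood y (G u) - gaussLikelihood y' (G u))
    (.of_forall fun u => abs_gaussLikelihood_sub_le (hL u) (hL' u))

lemma exp_neg_sq_div_two_le_posteriorDensity (hG : Measurable G) {y : E} {L : ℝ}
    (hL : ∀ u, ‖y - G u‖ ≤ L) (u : U) : exp (-(L ^ 2 / 2)) ≤ posteriorDensity γ G y u := by
  rw [posteriorDensity, le_div_iff₀ ((exp_pos _).trans_le (exp_neg_sq_div_two_le_evidence γ hG hL))]
  exact (mul_le_of_le_one_right (exp_pos _).le (evidence_le_one γ G y)).trans
    (exp_neg_sq_div_two_le_gaussLikelihood (hL u))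

lemma abs_posteriorDensity_sub_le (hG : Measurable G) {y y' : E} {L : ℝ}
    (hL : ∀ u, ‖y - G u‖ ≤ L) (hL' : ∀ u, ‖y' - G u‖ ≤ L) (u : U) :
    |posteriorDensity γ G y u - posteriorDensity γ G y' u|
      ≤ 2 * L * ‖y - y'‖ / exp (-(L ^ 2 / 2)) ^ 2 := by
  have h_quot := abs_div_sub_div_le (a := gaussLikelihood y (G u)) (exp_pos _)
    (exp_le_one_iff.2 (neg_nonpos.2 (by positivity)))
    (exp_neg_sq_div_two_le_evidence γ hG hL) (exp_neg_sq_div_two_le_evidence γ hG hL')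
    ((abs_of_pos (gaussLikelihood_pos y' (G u))).trans_le (gaussLikelihood_le_one y' (G u)))
  refine h_quot.trans (div_le_div_of_nonneg_right ?_ (by positivity))
  linarith [abs_gaussLikelihood_sub_le (hL u) (hL' u), abs_evidence_sub_le γ hG hL hL']

lemma hellingerDist_posteriorDensity_le (hG : Measurable G) {y y' : E} {L : ℝ}
    (hL : ∀ u, ‖y - G u‖ ≤ L) (hL' : ∀ u, ‖y' - G u‖ ≤ L) :
    hellingerDist γ (posteriorDensity γ G y) (posteriorDensity γ G y')
      ≤ L / (exp (-(L ^ 2 / 2)) ^ 2 * √(exp (-(L ^ 2 / 2)))) * ‖y - y'‖ := by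
  refine hellingerDist_le_of_abs_sqrt_sub_le γ fun u => ?_
  calc |√(posteriorDensity γ G y u) - √(posteriorDensity γ G y' u)|
      ≤ |posteriorDensity γ G y u - posteriorDensity γ G y' u| / (2 * √(exp (-(L ^ 2 / 2)))) :=
        abs_sqrt_sub_sqrt_le (exp_pos _) (exp_neg_sq_div_two_le_posteriorDensity γ hG hL u)
          (exp_neg_sq_div_two_le_posteriorDensity γ hG hL' u)
    _ ≤ 2 * L * ‖y - y'‖ / exp (-(L ^ 2 / 2)) ^ 2 / (2 * √(exp (-(L ^ 2 / 2)))) := by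
        gcongr
        exact abs_posteriorDensity_sub_le γ hG hL hL' u
    _ = L / (exp (-(L ^ 2 / 2)) ^ 2 * √(exp (-(L ^ 2 / 2)))) * ‖y - y'‖ := by
        field_simp

end Posterior

end

theorem posterior_hellinger_lipschitz_in_data_general
    {U : Type*} [MeasurableSpace U] (γ : Measure U) [IsProbabilityMeasure γ]
    {E : Type*} [NormedAddCommGroup E] [MeasurableSpace E]
    [BorelSpace E]
    (G : U → E) (hGmeas : Measurable G) (M : ℝ) (hGbdd : ∀ u, ‖G u‖ ≤ M)
    (r : ℝ) (hr : 0 < r) :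
    ∃ C : ℝ, 0 < C ∧ ∀ y y' : E, ‖y‖ ≤ r → ‖y'‖ ≤ r →
      Real.sqrt ((1 / 2) * ∫ u,
          (Real.sqrt (Real.exp (-((1 / 2) * ‖y - G u‖ ^ 2)) /
              (∫ v, Real.exp (-((1 / 2) * ‖y - G v‖ ^ 2)) ∂γ)) -
           Real.sqrt (Real.exp (-((1 / 2) * ‖y' - G u‖ ^ 2)) /
              (∫ v, Real.exp (-((1 / 2) * ‖y' - G v‖ ^ 2)) ∂γ))) ^ 2 ∂γ)
        ≤ C * ‖y - y'‖ := by
  set L := r + |M|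
  have hL : ∀ z : E, ‖z‖ ≤ r → ∀ u, ‖z - G u‖ ≤ L := fun z hz u =>
    (norm_sub_le _ _).trans (add_le_add hz ((hGbdd u).trans (le_abs_self M)))
  refine ⟨L / (exp (-(L ^ 2 / 2)) ^ 2 * √(exp (-(L ^ 2 / 2)))), by positivity,
    fun y y' hy hy' => ?_⟩
  exact hellingerDist_posteriorDensity_le γ hGmeas (hL y hy) (hL y' hy')

/-- Local Lipschitz continuity of the posterior in the data with respect to the Hellinger
metric: for a bounded measurable forward map `G` and every `r > 0`, there is `C(r) > 0`
such that for all data `y, y'` with `‖y‖, ‖y'‖ ≤ r`, the posteriors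
`dγ^y/dγ = exp(-(1/2)‖y - G u‖²)/Z(y)` satisfy `d_Hell(γ^y, γ^{y'}) ≤ C(r) ‖y - y'‖`. -/
theorem posterior_hellinger_lipschitz_in_data
    {U : Type*} [MeasurableSpace U] (γ : Measure U) [IsProbabilityMeasure γ]
    {E : Type*} [NormedAddCommGroup E] [InnerProductSpace ℝ E] [MeasurableSpace E]
    [BorelSpace E]
    (G : U → E) (hGmeas : Measurable G) (M : ℝ) (hGbdd : ∀ u, ‖G u‖ ≤ M)
    (r : ℝ) (hr : 0 < r) :
    ∃ C : ℝ, 0 < C ∧ ∀ y y' : E, ‖y‖ ≤ r → ‖y'‖ ≤ r →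
      Real.sqrt ((1 / 2) * ∫ u,
          (Real.sqrt (Real.exp (-((1 / 2) * ‖y - G u‖ ^ 2)) /
              (∫ v, Real.exp (-((1 / 2) * ‖y - G v‖ ^ 2)) ∂γ)) -
           Real.sqrt (Real.exp (-((1 / 2) * ‖y' - G u‖ ^ 2)) /
              (∫ v, Real.exp (-((1 / 2) * ‖y' - G v‖ ^ 2)) ∂γ))) ^ 2 ∂γ)
        ≤ C * ‖y - y'‖ :=
  posterior_hellinger_lipschitz_in_data_general γ G hGmeas M hGbdd r hr
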